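/- Let A be an integral domain with fraction field K, let Φ_1,…,Φ_q ∈ A[[x]]^p, and let M be the A[[x]]-submodule of A[[x]]^p they generate. Suppose (after renumbering) that {Φ_1,…,Φ_m} is of minimal cardinality among all subsets T of {Φ_1,…,Φ_q} such that the A[[x]]-submodule generated by T has diagram of initial exponents equal to N(M). Let N' be the K[[x]]-submodule of K[[x]]^p generated by Φ_1,…,Φ_m and let m̲ be the maximal ideal of K[[x]]. Then m = dim_K (N'/(m̲·N')). -/

import Mathlib

namespace QDiv

/-- Index set ℕ^n × {1,…,p}. -/
abbrev Idx (n p : ℕ) := (Fin n →₀ ℕ) × Fin p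

variable {n p q : ℕ}

/-- Value of the positive linear form `L` on a multi-index. -/
noncomputable def lval (L : Fin n → ℝ) (α : Fin n →₀ ℕ) : ℝ := ∑ i, L i * (α i : ℝ)

/-- Lexicographic order on multi-indices. -/
def mlexLt (a b : Fin n →₀ ℕ) : Prop := ∃ i : Fin n, (∀ j < i, a j = b j) ∧ a i < b i

/-- The order on `ℕ^n` given by comparing `(L α, α)` lexicographically. -/
def sLt (L : Fin n → ℝ) (a b : Fin n →₀ ℕ) : Prop :=
  lval L a < lval L b ∨ (lval L a = lval L b ∧ mlexLt a b)

/-- The total order on `ℕ^n × {1,…,p}` given by comparing `(L α, j, α)` lexicographically. -/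
def idxLt (L : Fin n → ℝ) (a b : Idx n p) : Prop :=
  lval L a.1 < lval L b.1 ∨
    (lval L a.1 = lval L b.1 ∧ (a.2 < b.2 ∨ (a.2 = b.2 ∧ mlexLt a.1 b.1)))

def idxLe (L : Fin n → ℝ) (a b : Idx n p) : Prop := ¬ idxLt L b a

section CommRing

variable {A : Type*} [CommRing A]

/-- The support of a `p`-tuple of formal power series. -/
def suppT (F : Fin p → MvPowerSeries (Fin n) A) : Set (Idx n p) :=
  {e | MvPowerSeries.coeff (R := A) e.1 (F e.2) ≠ 0}

/-- The support of a single formal power series. -/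
def suppS (f : MvPowerSeries (Fin n) A) : Set (Fin n →₀ ℕ) :=
  {α | MvPowerSeries.coeff (R := A) α f ≠ 0}

/-- `e` is the initial exponent `exp F` of the tuple `F`. -/
def IsExp (L : Fin n → ℝ) (F : Fin p → MvPowerSeries (Fin n) A) (e : Idx n p) : Prop :=
  e ∈ suppT F ∧ ∀ d ∈ suppT F, ¬ idxLt L d e

/-- `β` is the initial exponent of the scalar series `f`. -/
def IsExpS (L : Fin n → ℝ) (f : MvPowerSeries (Fin n) A) (β : Fin n →₀ ℕ) : Prop :=
  β ∈ suppS f ∧ ∀ γ ∈ suppS f, ¬ sLt L γ β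

/-- The diagram of initial exponents `N(M)` of a submodule `M ⊆ A[[x]]^p`. -/
def diagram (L : Fin n → ℝ)
    (M : Submodule (MvPowerSeries (Fin n) A) (Fin p → MvPowerSeries (Fin n) A)) :
    Set (Idx n p) :=
  {e | ∃ F ∈ M, IsExp L F e}

/-- `N + ℕ^n`. -/
def shift (N : Set (Idx n p)) : Set (Idx n p) :=
  {e | ∃ d ∈ N, ∃ β : Fin n →₀ ℕ, e = (d.1 + β, d.2)}

/-- A vertex of a diagram `N`. -/
def IsVertex (N : Set (Idx n p)) (e : Idx n p) : Prop :=
  e ∈ N ∧ shift (N \ {e}) ≠ N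

/-- The "cone" `(α,j) + ℕ^n` over a single index. -/
def cone (d : Idx n p) : Set (Idx n p) :=
  {e | e.2 = d.2 ∧ ∃ β : Fin n →₀ ℕ, e.1 = d.1 + β}

/-- The pieces `Δ_i` of the partition of `ℕ^n × {1,…,p}` associated with
initial exponents `v 1, …, v q`. -/
def Delta (v : Fin q → Idx n p) (i : Fin q) : Set (Idx n p) :=
  cone (v i) \ ⋃ (k : Fin q) (_ : k < i), cone (v k)

/-- The remaining piece `Δ` of the partition. -/
def DeltaC (v : Fin q → Idx n p) : Set (Idx n p) := (⋃ i, cone (v i))ᶜ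

/-- The monomial tuple `x^{(α,j)}`. -/
noncomputable def xMon (e : Idx n p) : Fin p → MvPowerSeries (Fin n) A := fun j =>
  if j = e.2 then MvPowerSeries.monomial (R := A) e.1 1 else 0

/-- All coefficients of a scalar series satisfy a predicate `P`
(e.g. membership in a subring of `K`). -/
def coeffsIn (P : A → Prop) (f : MvPowerSeries (Fin n) A) : Prop :=
  ∀ α : Fin n →₀ ℕ, P (MvPowerSeries.coeff (R := A) α f)

/-- All coefficients of a tuple of series satisfy `P`. -/
def coeffsInT (P : A → Prop) (F : Fin p → MvPowerSeries (Fin n) A) : Prop :=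
  ∀ j, coeffsIn P (F j)

/-- `G` belongs to the `B[[x]]`-submodule of `B[[x]]^p` generated by the set `Mset`,
where `B[[x]]` is the ring of series all of whose coefficients satisfy `P`. -/
def inSpanP (P : A → Prop) (Mset : Set (Fin p → MvPowerSeries (Fin n) A))
    (G : Fin p → MvPowerSeries (Fin n) A) : Prop :=
  ∃ (k : ℕ) (c : Fin k → MvPowerSeries (Fin n) A)
    (m : Fin k → (Fin p → MvPowerSeries (Fin n) A)),
    (∀ l, coeffsIn P (c l)) ∧ (∀ l, m l ∈ Mset) ∧ ∀ j, G j = ∑ l, c l * m l j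

/-- Membership in the image of the localization `S⁻¹A` inside the fraction field `K`. -/
def locMem {K : Type*} [Field K] [Algebra A K] (S : Submonoid A) (x : K) : Prop :=
  ∃ a : A, ∃ s ∈ S, x * algebraMap A K s = algebraMap A K a

/-- The multiplicative subset generated by the initial coefficients of `Φ_1,…,Φ_q`, given
their initial exponents `v i`. -/
def initCoeffMonoid (Φ : Fin q → (Fin p → MvPowerSeries (Fin n) A)) (v : Fin q → Idx n p) :
    Submonoid A :=
  Submonoid.closure (Set.range fun i => MvPowerSeries.coeff (R := A) (v i).1 (Φ i (v i).2))

/-- Strict order on diagrams: lexicographic comparison of the increasing sequences of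
vertices (padded by `∞`). Equivalently: the smallest index at which the vertex sets
differ is a vertex of the first diagram. -/
def DiagLT (L : Fin n → ℝ) (N₁ N₂ : Set (Idx n p)) : Prop :=
  ∃ e, IsVertex N₁ e ∧ ¬ IsVertex N₂ e ∧ ∀ d, idxLt L d e → (IsVertex N₁ d ↔ IsVertex N₂ d)

/-- Order on diagrams. -/
def DiagLE (L : Fin n → ℝ) (N₁ N₂ : Set (Idx n p)) : Prop :=
  (∀ e, IsVertex N₁ e ↔ IsVertex N₂ e) ∨ DiagLT L N₁ N₂

end CommRing

end QDiv

namespace QDiv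

-- lval lemmas
lemma lval_nonneg {L : Fin n → ℝ} (hL : ∀ i, 0 < L i) (α : Fin n →₀ ℕ) : 0 ≤ lval L α :=
  Finset.sum_nonneg fun i _ => mul_nonneg (hL i).le (Nat.cast_nonneg _)

lemma lval_add (L : Fin n → ℝ) (α β : Fin n →₀ ℕ) : lval L (α + β) = lval L α + lval L β := by
  simp [lval, Finsupp.add_apply, mul_add, Finset.sum_add_distrib]

lemma lval_le_left {L : Fin n → ℝ} (hL : ∀ i, 0 < L i) {γ δ α : Fin n →₀ ℕ} (h : γ + δ = α) :
    lval L γ ≤ lval L α := by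
  have := lval_add L γ δ
  rw [h] at this
  linarith [lval_nonneg hL δ]

lemma finite_lval_le {L : Fin n → ℝ} (hL : ∀ i, 0 < L i) (C : ℝ) :
    {γ : Fin n →₀ ℕ | lval L γ ≤ C}.Finite := by
  set γ₀ : Fin n →₀ ℕ := Finsupp.equivFunOnFinite.symm fun i => ⌈C / L i⌉₊ with hγ₀
  refine (Set.finite_Iic γ₀).subset ?_
  intro γ hγ
  simp only [Set.mem_Iic]
  intro i
  have h1 : L i * (γ i : ℝ) ≤ lval L γ := by
    refine Finset.single_le_sum (f := fun i => L i * (γ i : ℝ)) ?_ (Finset.mem_univ i)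
    exact fun j _ => mul_nonneg (hL j).le (Nat.cast_nonneg _)
  have h2 : (γ i : ℝ) ≤ C / L i := by
    rw [le_div_iff₀ (hL i)]
    calc (γ i : ℝ) * L i = L i * γ i := mul_comm _ _
    _ ≤ lval L γ := h1
    _ ≤ C := hγ
  have h3 : (γ i : ℝ) ≤ (⌈C / L i⌉₊ : ℝ) := h2.trans (Nat.le_ceil _)
  have : γ i ≤ ⌈C / L i⌉₊ := Nat.cast_le.mp h3
  simpa [hγ₀, Finsupp.le_def] using this

lemma idxLt_lval_le {L : Fin n → ℝ} {a b : Idx n p} (h : idxLt L a b) : lval L a.1 ≤ lval L b.1 := by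
  rcases h with h | ⟨h, _⟩
  · exact h.le
  · exact h.le

section Transfer

variable {A : Type*} [CommRing A] [IsDomain A]
  {K : Type*} [Field K] [Algebra A K] [IsFractionRing A K]

/-- The coefficientwise map `A[[x]]^p → K[[x]]^p`. -/
noncomputable def mapT (K : Type*) [Field K] [Algebra A K]
    (F : Fin p → MvPowerSeries (Fin n) A) : Fin p → MvPowerSeries (Fin n) K :=
  fun j => MvPowerSeries.map (σ := Fin n) (algebraMap A K) (F j)

lemma suppT_mapT (F : Fin p → MvPowerSeries (Fin n) A) : suppT (mapT K F) = suppT F := by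
  ext e
  simp only [suppT, mapT, Set.mem_setOf_eq, MvPowerSeries.coeff_map]
  constructor
  · intro h hc; exact h (by rw [hc, map_zero])
  · intro h hc; exact h ((IsFractionRing.injective A K) (by rw [hc, map_zero]))

lemma isExp_mapT {L : Fin n → ℝ} {F : Fin p → MvPowerSeries (Fin n) A} {e : Idx n p} :
    IsExp L (mapT K F) e ↔ IsExp L F e := by
  unfold IsExp; rw [suppT_mapT]

lemma mapT_mem_span {Ψ : Set (Fin p → MvPowerSeries (Fin n) A)}
    {F : Fin p → MvPowerSeries (Fin n) A}
    (hF : F ∈ Submodule.span (MvPowerSeries (Fin n) A) Ψ) :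
    mapT K F ∈ Submodule.span (MvPowerSeries (Fin n) K) (mapT K '' Ψ) := by
  induction hF using Submodule.span_induction with
  | mem x hx => exact Submodule.subset_span ⟨x, hx, rfl⟩
  | zero =>
      have : mapT K (0 : Fin p → MvPowerSeries (Fin n) A) = 0 := by
        funext j; simp [mapT]
      rw [this]; exact Submodule.zero_mem _
  | add x y _ _ hx hy =>
      have : mapT K (x + y) = mapT K x + mapT K y := by
        funext j; simp [mapT, map_add]
      rw [this]; exact Submodule.add_mem _ hx hy
  | smul c x _ hx =>
      have : mapT K (c • x) = MvPowerSeries.map (σ := Fin n) (algebraMap A K) c • mapT K x := by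
        funext j; simp [mapT, Pi.smul_apply, smul_eq_mul, map_mul]
      rw [this]; exact Submodule.smul_mem _ _ hx

theorem diagram_span_mapT (L : Fin n → ℝ) (hL : ∀ i, 0 < L i)
    (Ψ : Set (Fin p → MvPowerSeries (Fin n) A)) :
    diagram L (Submodule.span (MvPowerSeries (Fin n) A) Ψ) =
      diagram L (Submodule.span (MvPowerSeries (Fin n) K) (mapT K '' Ψ)) := by
  ext e
  constructor
  · rintro ⟨F, hF, hFe⟩
    exact ⟨mapT K F, mapT_mem_span hF, isExp_mapT.mpr hFe⟩
  · rintro ⟨G, hG, hGe⟩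
    rw [Submodule.mem_span_set'] at hG
    obtain ⟨k, f, g, hsum⟩ := hG
    have hgl : ∀ l : Fin k, ∃ Fl, Fl ∈ Ψ ∧ mapT K Fl = (g l : Fin p → MvPowerSeries (Fin n) K) := by
      intro l; obtain ⟨F, hF, hFeq⟩ := (g l).2; exact ⟨F, hF, hFeq⟩
    choose F hFΨ hFmap using hgl
    set C := lval L e.1 with hC
    set T := (finite_lval_le hL C).toFinset with hT
    obtain ⟨b, hb⟩ := IsLocalization.exist_integer_multiples (nonZeroDivisors A)
      (Finset.univ ×ˢ T) (fun lγ : Fin k × (Fin n →₀ ℕ) => MvPowerSeries.coeff (R := K) lγ.2 (f lγ.1))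
    classical
    set d : Fin k → MvPowerSeries (Fin n) A := fun l γ =>
      if h : (l, γ) ∈ Finset.univ ×ˢ T then (hb _ h).choose else 0 with hd
    have hdspec : ∀ (l : Fin k) (γ : Fin n →₀ ℕ), lval L γ ≤ C →
        algebraMap A K (MvPowerSeries.coeff (R := A) γ (d l)) =
          algebraMap A K b * MvPowerSeries.coeff (R := K) γ (f l) := by
      intro l γ hγ
      have hmem : (l, γ) ∈ Finset.univ ×ˢ T := by
        simp [hT, Set.Finite.mem_toFinset, Set.mem_setOf_eq, hγ]
      have : MvPowerSeries.coeff (R := A) γ (d l) = (hb _ hmem).choose := by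
        rw [MvPowerSeries.coeff_apply]; simp only [hd, dif_pos hmem]
      rw [this, (hb _ hmem).choose_spec]
      rw [Algebra.smul_def]
    set H : Fin p → MvPowerSeries (Fin n) A := ∑ l, d l • F l with hH
    have hHmem : H ∈ Submodule.span (MvPowerSeries (Fin n) A) Ψ :=
      Submodule.sum_mem _ fun l _ =>
        Submodule.smul_mem _ _ (Submodule.subset_span (hFΨ l))
    have hGrep : ∀ j, G j = ∑ l, f l * (g l : Fin p → MvPowerSeries (Fin n) K) j := by
      intro j
      rw [← hsum]
      simp [Finset.sum_apply, Pi.smul_apply, smul_eq_mul]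
    have hcoeff : ∀ dd : Idx n p, lval L dd.1 ≤ C →
        algebraMap A K (MvPowerSeries.coeff (R := A) dd.1 (H dd.2)) =
          algebraMap A K b * MvPowerSeries.coeff (R := K) dd.1 (G dd.2) := by
      rintro ⟨α, j⟩ hα
      have h1 : MvPowerSeries.coeff (R := A) α (H j) = ∑ l, MvPowerSeries.coeff (R := A) α (d l * F l j) := by
        rw [hH]
        simp [Finset.sum_apply, Pi.smul_apply, smul_eq_mul, map_sum]
      rw [h1, map_sum, hGrep j, map_sum, Finset.mul_sum]
      refine Finset.sum_congr rfl fun l _ => ?_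
      rw [MvPowerSeries.coeff_mul, map_sum, MvPowerSeries.coeff_mul, Finset.mul_sum]
      refine Finset.sum_congr rfl fun gd hgd => ?_
      rw [Finset.HasAntidiagonal.mem_antidiagonal] at hgd
      rw [map_mul, hdspec l gd.1 ((lval_le_left hL hgd).trans hα)]
      have : algebraMap A K (MvPowerSeries.coeff (R := A) gd.2 (F l j)) =
          MvPowerSeries.coeff (R := K) gd.2 ((g l : Fin p → MvPowerSeries (Fin n) K) j) := by
        rw [← hFmap l]
        simp [mapT, MvPowerSeries.coeff_map]
      rw [this]; ring
    have hbne : algebraMap A K (b : A) ≠ 0 :=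
      IsFractionRing.to_map_ne_zero_of_mem_nonZeroDivisors b.2
    refine ⟨H, hHmem, ?_, ?_⟩
    · intro h0
      have hc := hcoeff e le_rfl
      rw [h0, map_zero] at hc
      rcases mul_eq_zero.mp hc.symm with h | h
      · exact hbne h
      · exact hGe.1 h
    · intro dd hdd hlt
      have hle : lval L dd.1 ≤ C := idxLt_lval_le hlt
      have := hcoeff dd hle
      have hne : MvPowerSeries.coeff (R := K) dd.1 (G dd.2) ≠ 0 := by
        intro h0
        rw [h0, mul_zero] at this
        exact hdd ((IsFractionRing.injective A K) (by rw [this, map_zero]))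
      exact hGe.2 dd hne hlt

end Transfer

end QDiv

namespace QDiv

set_option maxHeartbeats 2000000

/-- **Corollary 2.7.** If `Φ_1,…,Φ_m` is a smallest subset of `Φ_1,…,Φ_q` generating a
submodule with the same diagram of initial exponents as `M`, then `m` equals the
dimension over `K` of `N'/(m̲·N')`, where `N'` is the `K[[x]]`-submodule generated by
`Φ_1,…,Φ_m` and `m̲` is the maximal ideal of `K[[x]]`. -/
theorem minimal_generators_eq_finrank
    {n p q m : ℕ} (hn : 0 < n) (hp : 0 < p) (hm : m ≤ q)
    {A : Type*} [CommRing A] [IsDomain A]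
    {K : Type*} [Field K] [Algebra A K] [IsFractionRing A K]
    (L : Fin n → ℝ) (hL : ∀ i, 0 < L i)
    (Φ : Fin q → (Fin p → MvPowerSeries (Fin n) A))
    -- the first m of the Φ's generate a submodule with the same diagram as M
    (hdiag : diagram L (Submodule.span (MvPowerSeries (Fin n) A)
        (Set.range fun i : Fin m => Φ (Fin.castLE hm i))) =
      diagram L (Submodule.span (MvPowerSeries (Fin n) A) (Set.range Φ)))
    -- and m is minimal among the cardinalities of subsets with this property
    (hmin : ∀ T : Finset (Fin q),
      diagram L (Submodule.span (MvPowerSeries (Fin n) A) (Φ '' (T : Set (Fin q)))) =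
        diagram L (Submodule.span (MvPowerSeries (Fin n) A) (Set.range Φ)) →
      m ≤ T.card) :
    m = Module.finrank K
      ((Submodule.span (MvPowerSeries (Fin n) K)
          (Set.range fun i : Fin m => fun j =>
            MvPowerSeries.map (σ := Fin n) (algebraMap A K) (Φ (Fin.castLE hm i) j))) ⧸
        (Submodule.comap
          (Submodule.span (MvPowerSeries (Fin n) K)
            (Set.range fun i : Fin m => fun j =>
              MvPowerSeries.map (σ := Fin n) (algebraMap A K) (Φ (Fin.castLE hm i) j))).subtype
          (RingHom.ker (MvPowerSeries.constantCoeff (σ := Fin n) (R := K)) •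
            Submodule.span (MvPowerSeries (Fin n) K)
              (Set.range fun i : Fin m => fun j =>
                MvPowerSeries.map (σ := Fin n) (algebraMap A K) (Φ (Fin.castLE hm i) j))))) := by
  classical
  let R := MvPowerSeries (Fin n) K
  let RA := MvPowerSeries (Fin n) A
  let V := Fin p → R
  let g : Fin m → V := fun i : Fin m => fun j =>
    MvPowerSeries.map (σ := Fin n) (algebraMap A K) (Φ (Fin.castLE hm i) j)
  let N' : Submodule R V := Submodule.span R (Set.range g)
  let I : Ideal R := RingHom.ker (MvPowerSeries.constantCoeff (σ := Fin n) (R := K))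
  let W₀ : Submodule R N' := Submodule.comap N'.subtype (I • N')
  show m = Module.finrank K (N' ⧸ W₀)
  have hjac : I ≤ Ideal.jacobson ⊥ := by
    intro f hf
    refine IsLocalRing.maximalIdeal_le_jacobson ⊥ ?_
    rw [IsLocalRing.mem_maximalIdeal]
    intro hu
    rw [MvPowerSeries.isUnit_iff_constantCoeff] at hu
    rw [RingHom.mem_ker] at hf
    rw [hf] at hu
    exact hu.ne_zero rfl
  have halg : ∀ c : R, c - algebraMap K R (MvPowerSeries.constantCoeff (σ := Fin n) (R := K) c) ∈ I := by
    intro c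
    rw [RingHom.mem_ker, map_sub]
    have h0 : (MvPowerSeries.constantCoeff (σ := Fin n) (R := K))
        (algebraMap K R (MvPowerSeries.constantCoeff (σ := Fin n) (R := K) c)) =
        MvPowerSeries.constantCoeff (σ := Fin n) (R := K) c := MvPowerSeries.constantCoeff_C _
    rw [h0, sub_self]
  have hgN : ∀ i, g i ∈ N' := fun i => Submodule.subset_span ⟨i, rfl⟩
  let g' : Fin m → N' := fun i => ⟨g i, hgN i⟩
  let ebar : Fin m → (N' ⧸ W₀) := fun i => Submodule.Quotient.mk (g' i)
  have hIact : ∀ f ∈ I, ∀ z : N' ⧸ W₀, f • z = 0 := by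
    intro f hf z
    obtain ⟨y, rfl⟩ := Submodule.Quotient.mk_surjective W₀ z
    have h0 : f • (Submodule.Quotient.mk y : N' ⧸ W₀) = Submodule.Quotient.mk (f • y) := rfl
    rw [h0, Submodule.Quotient.mk_eq_zero]
    show (f • y : N').1 ∈ I • N'
    exact Submodule.smul_mem_smul hf y.2
  have hRK : ∀ (s : Set (N' ⧸ W₀)) (x : N' ⧸ W₀),
      x ∈ Submodule.span R s → x ∈ Submodule.span K s := by
    intro s x hx
    induction hx using Submodule.span_induction with
    | mem y hy => exact Submodule.subset_span hy
    | zero => exact Submodule.zero_mem _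
    | add y z _ _ hy hz => exact Submodule.add_mem _ hy hz
    | smul c y _ hy =>
        have h0 : (c - algebraMap K R (MvPowerSeries.constantCoeff (σ := Fin n) (R := K) c)) • y = 0 :=
          hIact _ (halg c) y
        have h1 : c • y = (MvPowerSeries.constantCoeff (σ := Fin n) (R := K) c) • y := by
          have h2 : c • y =
              (c - algebraMap K R (MvPowerSeries.constantCoeff (σ := Fin n) (R := K) c)) • y +
              (algebraMap K R (MvPowerSeries.constantCoeff (σ := Fin n) (R := K) c)) • y := by
            rw [← add_smul]
            rw [sub_add_cancel]
          rw [h2, h0, zero_add, algebraMap_smul]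
        rw [h1]
        exact Submodule.smul_mem _ _ hy
  have hspanR : Submodule.span R (Set.range g') = (⊤ : Submodule R N') := by
    apply Submodule.map_injective_of_injective (Submodule.injective_subtype N')
    rw [Submodule.map_span, Submodule.map_subtype_top]
    have h0 : N'.subtype '' Set.range g' = Set.range g := by
      rw [← Set.range_comp]; rfl
    rw [h0]
  have hspanRQ : Submodule.span R (Set.range ebar) = ⊤ := by
    have h1 : Set.range ebar = W₀.mkQ '' Set.range g' := by
      rw [← Set.range_comp]; rfl
    rw [h1, ← Submodule.map_span, hspanR, Submodule.map_top, Submodule.range_mkQ]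
  have hKtop : Submodule.span K (Set.range ebar) = ⊤ := by
    rw [eq_top_iff]
    intro x _
    exact hRK _ x (hspanRQ ▸ Submodule.mem_top)
  have hfinQ : Module.Finite K (N' ⧸ W₀) := by
    rw [Module.finite_def]
    exact ⟨Finset.univ.image ebar, by
      rw [Finset.coe_image, Finset.coe_univ, Set.image_univ, hKtop]⟩
  have step1 : Module.finrank K (N' ⧸ W₀) ≤ m := by
    have h1 := finrank_span_finset_le_card (R := K) (Finset.univ.image ebar)
    rw [Set.finrank] at h1
    rw [Finset.coe_image, Finset.coe_univ, Set.image_univ, hKtop, finrank_top] at h1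
    exact h1.trans ((Finset.card_image_le).trans (by simp))
  obtain ⟨b, hbsub, hbspan, hbli⟩ := exists_linearIndependent K (Set.range ebar)
  have hbfin : b.Finite := hbli.setFinite
  have hbcard : hbfin.toFinset.card ≤ Module.finrank K (N' ⧸ W₀) :=
    LinearIndependent.finset_card_le_finrank (hbli.linearIndepOn_id' (t := (hbfin.toFinset : Set _))
      (by rw [Subtype.range_coe, hbfin.coe_toFinset])).linearIndependent
  have hsel : ∀ v ∈ b, ∃ i : Fin m, ebar i = v := fun v hv => hbsub hv
  let S₀ : Finset (Fin m) := hbfin.toFinset.attach.image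
    (fun v => (hsel v.1 (hbfin.mem_toFinset.mp v.2)).choose)
  have hS₀card : S₀.card ≤ hbfin.toFinset.card :=
    (Finset.card_image_le).trans (by rw [Finset.card_attach])
  have hbsub2 : b ⊆ ebar '' ↑S₀ := by
    intro v hv
    refine ⟨(hsel v hv).choose, ?_, (hsel v hv).choose_spec⟩
    exact Finset.mem_coe.mpr (Finset.mem_image.mpr ⟨⟨v, hbfin.mem_toFinset.mpr hv⟩,
      Finset.mem_attach _ _, rfl⟩)
  have hKspan2 : Submodule.span K (ebar '' ↑S₀) = ⊤ := by
    rw [eq_top_iff, ← hKtop, ← hbspan]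
    exact Submodule.span_mono hbsub2
  have hQspan : ∀ x : N' ⧸ W₀, x ∈ Submodule.span R (ebar '' ↑S₀) := by
    intro x
    have hx : x ∈ Submodule.span K (ebar '' ↑S₀) := hKspan2 ▸ Submodule.mem_top
    exact Submodule.span_le_restrictScalars K R _ hx
  let P' : Submodule R V := Submodule.span R (g '' ↑S₀)
  have hNle : N' ≤ P' ⊔ I • N' := by
    intro x hx
    have h1 : W₀.mkQ ⟨x, hx⟩ ∈ Submodule.span R (ebar '' ↑S₀) := hQspan _
    have h2 : ebar '' (S₀ : Set (Fin m)) = W₀.mkQ '' (g' '' ↑S₀) := by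
      rw [Set.image_image]; rfl
    rw [h2, ← Submodule.map_span] at h1
    have h3 : (⟨x, hx⟩ : N') ∈ W₀ ⊔ Submodule.span R (g' '' ↑S₀) := by
      rw [← Submodule.comap_map_mkQ]
      exact h1
    have h4 : x ∈ Submodule.map N'.subtype (W₀ ⊔ Submodule.span R (g' '' ↑S₀)) :=
      ⟨⟨x, hx⟩, h3, rfl⟩
    rw [Submodule.map_sup] at h4
    have h5 : Submodule.map N'.subtype W₀ ≤ I • N' := by
      rw [Submodule.map_comap_subtype]
      exact inf_le_right
    have h6 : Submodule.map N'.subtype (Submodule.span R (g' '' ↑S₀)) = P' := by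
      rw [Submodule.map_span, Set.image_image]
      rfl
    rw [h6] at h4
    exact (sup_le (h5.trans le_sup_right) le_sup_left) h4
  have hfg : N'.FG := Submodule.fg_span (Set.finite_range g)
  have hNP : N' ≤ P' := Submodule.le_of_le_smul_of_le_jacobson_bot hfg hjac hNle
  have hPeq : P' = N' := by
    refine le_antisymm ?_ hNP
    refine Submodule.span_le.mpr ?_
    rintro y ⟨i, _, rfl⟩
    exact hgN i
  let S' : Finset (Fin q) := S₀.image (Fin.castLE hm)
  have hdiagS' : diagram L (Submodule.span RA (Φ '' (S' : Set (Fin q)))) =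
      diagram L (Submodule.span RA (Set.range Φ)) := by
    have h12 : mapT K '' (Φ '' (S' : Set (Fin q))) = g '' ↑S₀ := by
      rw [Finset.coe_image, Set.image_image, Set.image_image]
      rfl
    have h3 : Set.range g
        = mapT K '' Set.range (fun i : Fin m => Φ (Fin.castLE hm i)) := by
      rw [← Set.range_comp]; rfl
    calc diagram L (Submodule.span RA (Φ '' (S' : Set (Fin q))))
        = diagram L (Submodule.span R (mapT K '' (Φ '' (S' : Set (Fin q))))) :=
          diagram_span_mapT L hL _
      _ = diagram L (Submodule.span R (Set.range g)) := by rw [h12]; exact congrArg _ hPeq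
      _ = diagram L (Submodule.span R
            (mapT K '' Set.range (fun i : Fin m => Φ (Fin.castLE hm i)))) := by rw [← h3]
      _ = diagram L (Submodule.span RA
            (Set.range (fun i : Fin m => Φ (Fin.castLE hm i)))) :=
          (diagram_span_mapT L hL _).symm
      _ = diagram L (Submodule.span RA (Set.range Φ)) := hdiag
  have step2 : m ≤ Module.finrank K (N' ⧸ W₀) :=
    ((hmin S' hdiagS').trans ((Finset.card_image_le).trans hS₀card)).trans hbcard
  exact le_antisymm step2 step1

end QDiv
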